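/- Let d ≥ 1 and let ω, ω' ∈ {0,1}^{ℤ^d} satisfy ω ≤ ω' pointwise. Let r_0 ≥ 1 and M be positive integers, let K ≥ 0 be an integer, and set r_k = 2^k r_0 for 0 ≤ k ≤ K. Assume that r_0 ≤ M ≤ r_K/10, that Exist(r_k, ω) holds for every 0 ≤ k ≤ K, and that Unique(r_k, ω, ω') holds for every 0 ≤ k ≤ K. Then O(ω') contains a connected set intersecting both B_{r_0} and ∂B_M; in particular, some nearest-neighbor path of ω'-open sites joins B_{r_0} to ∂B_M. -/

import Mathlib

/-- Nearest-neighbor adjacency on `ℤ^d`: Euclidean distance one. -/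
def nnAdj {d : ℕ} (x y : Fin d → ℤ) : Prop := ∑ i, (x i - y i) ^ 2 = 1

/-- The box `B_r = ([-r,r] ∩ ℤ)^d`. -/
def latBox (d r : ℕ) : Set (Fin d → ℤ) := {x | ∀ i, |x i| ≤ (r : ℤ)}

/-- The set `∂B_r = {x ∈ ℤ^d : |x|_∞ = r}`. -/
def latSphere (d r : ℕ) : Set (Fin d → ℤ) :=
  {x | (∀ i, |x i| ≤ (r : ℤ)) ∧ ∃ i, |x i| = (r : ℤ)}

/-- The set of `ω`-open sites. -/
def openSites {d : ℕ} (ω : (Fin d → ℤ) → Bool) : Set (Fin d → ℤ) := {x | ω x = true}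

/-- `x` and `y` are joined by a nearest-neighbor path lying in `A`. -/
def LatJoined {d : ℕ} (A : Set (Fin d → ℤ)) (x y : Fin d → ℤ) : Prop :=
  ∃ l : List (Fin d → ℤ), l.Chain' nnAdj ∧ l.head? = some x ∧ l.getLast? = some y ∧
    ∀ z ∈ l, z ∈ A

/-- A set is connected if any two of its points are joined by a path inside it. -/
def LatConn {d : ℕ} (A : Set (Fin d → ℤ)) : Prop := ∀ x ∈ A, ∀ y ∈ A, LatJoined A x y

/-- The `ℓ∞`-diameter of `A` is at least `ρ`. -/
def diamGE {d : ℕ} (A : Set (Fin d → ℤ)) (ρ : ℝ) : Prop :=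
  ∃ x ∈ A, ∃ y ∈ A, ∃ i, ρ ≤ |(x i : ℝ) - (y i : ℝ)|

/-- `Exist(r, ω)`: `O(ω) ∩ B_r` contains a connected subset of `ℓ∞`-diameter at least `r/5`. -/
def ExistEv (d r : ℕ) (ω : (Fin d → ℤ) → Bool) : Prop :=
  ∃ A : Set (Fin d → ℤ), A ⊆ openSites ω ∩ latBox d r ∧ LatConn A ∧ diamGE A ((r : ℝ) / 5)

/-- `A` is a connected component of `S`: a maximal nonempty connected subset of `S`. -/
def IsCompOf {d : ℕ} (A S : Set (Fin d → ℤ)) : Prop :=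
  A ⊆ S ∧ A.Nonempty ∧ LatConn A ∧
    ∀ A' : Set (Fin d → ℤ), A ⊆ A' → A' ⊆ S → LatConn A' → A' = A

/-- `Unique(r, ω, ω')`: any two connected components of `O(ω) ∩ B_r` of `ℓ∞`-diameter at
least `r/10` are intersected by a common connected subset of `O(ω') ∩ B_{2r}`. -/
def UniqueEv (d r : ℕ) (ω ω' : (Fin d → ℤ) → Bool) : Prop :=
  ∀ A₁ A₂ : Set (Fin d → ℤ),
    IsCompOf A₁ (openSites ω ∩ latBox d r) → IsCompOf A₂ (openSites ω ∩ latBox d r) →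
    diamGE A₁ ((r : ℝ) / 10) → diamGE A₂ ((r : ℝ) / 10) →
    ∃ B : Set (Fin d → ℤ), B ⊆ openSites ω' ∩ latBox d (2 * r) ∧ LatConn B ∧
      (B ∩ A₁).Nonempty ∧ (B ∩ A₂).Nonempty

/-!
Write `r_k = 2^k r₀`. Induct on `k`, keeping an `ω'`-open connected set `U_k` that meets
`B_{r₀}` and contains a component `C_k` of `O(ω) ∩ B_{r_k}` of diameter at least `r_k / 5`.
At the next scale `C_k` lies in a component `D` of `O(ω) ∩ B_{r_{k+1}}` of diameter at least
`r_{k+1} / 10`, and `Exist(r_{k+1})` yields a component `C_{k+1}` of diameter at least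
`r_{k+1} / 5`; `Unique(r_{k+1})` gives a connected `B ⊆ O(ω')` meeting both, so
`U_{k+1} = U_k ∪ D ∪ B ∪ C_{k+1}` is again connected. Finally `U_K` has diameter at least
`r_K / 5 ≥ 2M`, so it reaches `ℓ∞`-norm `M`, and since the norm changes by at most one along a
nearest-neighbour step, a path in `U_K` from `B_{r₀} ⊆ B_M` outwards crosses `∂B_M`.
-/

open Relation

theorem Relation.ReflTransGen.exists_eq_of_le_succ {α β : Type*} [LinearOrder β] [SuccOrder β]
    {r : α → α → Prop} {f : α → β} (hf : ∀ x y, r x y → f y ≤ Order.succ (f x))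
    {a b : α} (h : ReflTransGen r a b) {m : β} (ha : f a ≤ m) (hb : m ≤ f b) :
    ∃ z, ReflTransGen r a z ∧ f z = m := by
  induction h with
  | refl => exact ⟨a, .refl, le_antisymm ha hb⟩
  | @tail b c hab hbc ih =>
    rcases le_or_gt m (f b) with hmb | hbm
    · exact ih hmb
    · exact ⟨c, hab.tail hbc,
        le_antisymm ((hf b c hbc).trans (Order.succ_le_of_lt hbm)) hb⟩

variable {d : ℕ}

theorem nnAdj.symm {x y : Fin d → ℤ} (h : nnAdj x y) : nnAdj y x := by
  unfold nnAdj at *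
  rw [← h]
  exact Finset.sum_congr rfl fun i _ => by ring

theorem nnAdj.abs_sub_le_one {x y : Fin d → ℤ} (h : nnAdj x y) (i : Fin d) :
    |x i - y i| ≤ 1 := by
  rw [← sq_le_one_iff_abs_le_one, ← h]
  exact Finset.single_le_sum (f := fun j => (x j - y j) ^ 2) (fun j _ => sq_nonneg _)
    (Finset.mem_univ i)

def LatAdjIn (A : Set (Fin d → ℤ)) (x y : Fin d → ℤ) : Prop :=
  x ∈ A ∧ y ∈ A ∧ nnAdj x y

section LatAdjIn

variable {A B : Set (Fin d → ℤ)} {x y : Fin d → ℤ}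

instance (A : Set (Fin d → ℤ)) : Std.Symm (LatAdjIn A) where
  symm _ _ h := ⟨h.2.1, h.1, h.2.2.symm⟩

theorem LatAdjIn.mono (hAB : A ⊆ B) : LatAdjIn A ≤ LatAdjIn B :=
  fun _ _ h => ⟨hAB h.1, hAB h.2.1, h.2.2⟩

theorem mem_of_reflTransGen_latAdjIn (h : ReflTransGen (LatAdjIn A) x y) (hx : x ∈ A) :
    y ∈ A := by
  induction h with
  | refl => exact hx
  | tail _ h _ => exact h.2.1

theorem latJoined_iff_reflTransGen (hx : x ∈ A) :
    LatJoined A x y ↔ ReflTransGen (LatAdjIn A) x y := by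
  constructor
  · rintro ⟨l, hl, hhead, hlast, hA⟩
    have hne : l ≠ [] := by rintro rfl; simp at hhead
    have := List.relationReflTransGen_of_exists_isChain l
      (hl.imp_of_mem_imp (S := LatAdjIn A) fun a b ha hb hab => ⟨hA a ha, hA b hb, hab⟩)
      hne
    rwa [(List.head_eq_iff_head?_eq_some hne).2 hhead,
      (List.getLast_eq_iff_getLast?_eq_some hne).2 hlast] at this
  · intro h
    obtain ⟨l, hne, hl, hhead, hlast⟩ := List.exists_isChain_ne_nil_of_relationReflTransGen h
    refine ⟨l, hl.imp fun _ _ hab => hab.2.2, ?_, ?_,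
      hl.induction (· ∈ A) l (fun _ _ hab _ => hab.2.1) fun _ => hhead ▸ hx⟩
    · rw [← hhead]; exact List.head?_eq_some_head hne
    · rw [← hlast]; exact List.getLast?_eq_some_getLast hne

theorem latConn_iff_reflTransGen :
    LatConn A ↔ ∀ x ∈ A, ∀ y ∈ A, ReflTransGen (LatAdjIn A) x y :=
  forall₂_congr fun _ hx => forall₂_congr fun _ _ => latJoined_iff_reflTransGen hx

theorem LatConn.union (hA : LatConn A) (hB : LatConn B) (hAB : (A ∩ B).Nonempty) :
    LatConn (A ∪ B) := by
  rw [latConn_iff_reflTransGen] at *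
  obtain ⟨z, hzA, hzB⟩ := hAB
  have inA : ∀ {x y}, x ∈ A → y ∈ A → ReflTransGen (LatAdjIn (A ∪ B)) x y :=
    fun hx hy => ReflTransGen.mono (LatAdjIn.mono Set.subset_union_left) _ _ (hA _ hx _ hy)
  have inB : ∀ {x y}, x ∈ B → y ∈ B → ReflTransGen (LatAdjIn (A ∪ B)) x y :=
    fun hx hy => ReflTransGen.mono (LatAdjIn.mono Set.subset_union_right) _ _ (hB _ hx _ hy)
  rintro x (hx | hx) y (hy | hy)
  · exact inA hx hy
  · exact (inA hx hzA).trans (inB hzB hy)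
  · exact (inB hx hzB).trans (inA hzA hy)
  · exact inB hx hy

theorem Relation.ReflTransGen.latAdjIn_reachable {S : Set (Fin d → ℤ)} {a z : Fin d → ℤ}
    (h : ReflTransGen (LatAdjIn S) a z) :
    ReflTransGen (LatAdjIn {w | ReflTransGen (LatAdjIn S) a w}) a z := by
  induction h with
  | refl => exact .refl
  | tail hab hbc ih => exact ih.tail ⟨hab, hab.tail hbc, hbc.2.2⟩

/-- The component containing `A` is the set of sites reachable inside `S` from a point of `A`. -/
theorem LatConn.exists_isCompOf_superset {S : Set (Fin d → ℤ)} (hA : LatConn A) (hAS : A ⊆ S)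
    (hne : A.Nonempty) : ∃ C, IsCompOf C S ∧ A ⊆ C := by
  obtain ⟨a, ha⟩ := hne
  set C := {w | ReflTransGen (LatAdjIn S) a w}
  have hAC : A ⊆ C := fun z hz =>
    ReflTransGen.mono (LatAdjIn.mono hAS) _ _ (latConn_iff_reflTransGen.1 hA a ha z hz)
  have hCS : C ⊆ S := fun _ hz => mem_of_reflTransGen_latAdjIn hz (hAS ha)
  have hC : LatConn C := latConn_iff_reflTransGen.2 fun x hx y hy =>
    (Std.Symm.symm _ _ hx.latAdjIn_reachable).trans hy.latAdjIn_reachable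
  refine ⟨C, ⟨hCS, ⟨a, hAC ha⟩, hC, fun A' hCA' hA'S hA' => ?_⟩, hAC⟩
  refine Set.Subset.antisymm (fun z hz => ?_) hCA'
  exact ReflTransGen.mono (LatAdjIn.mono hA'S) _ _
    (latConn_iff_reflTransGen.1 hA' a (hCA' (hAC ha)) z hz)

end LatAdjIn

theorem latBox_mono {r r' : ℕ} (h : r ≤ r') : latBox d r ⊆ latBox d r' :=
  fun _ hx i => (hx i).trans (by exact_mod_cast h)

theorem openSites_mono {ω ω' : (Fin d → ℤ) → Bool} (h : ∀ x, ω x ≤ ω' x) :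
    openSites ω ⊆ openSites ω' :=
  fun x hx => le_antisymm (Bool.le_true _) ((show ω x = true from hx) ▸ h x)

section diamGE

variable {A B : Set (Fin d → ℤ)} {ρ ρ' : ℝ}

theorem diamGE.nonempty (h : diamGE A ρ) : A.Nonempty :=
  let ⟨x, hx, _⟩ := h; ⟨x, hx⟩

theorem diamGE.mono (hAB : A ⊆ B) (hρ : ρ' ≤ ρ) (h : diamGE A ρ) : diamGE B ρ' :=
  let ⟨x, hx, y, hy, i, hxy⟩ := h; ⟨x, hAB hx, y, hAB hy, i, hρ.trans hxy⟩

theorem diamGE.exists_le_natAbs {M : ℕ} (h : diamGE A (2 * M)) :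
    ∃ p ∈ A, ∃ i, M ≤ (p i).natAbs := by
  obtain ⟨x, hx, y, hy, i, hxy⟩ := h
  have hxy' : 2 * (M : ℤ) ≤ |x i - y i| := by exact_mod_cast hxy
  by_contra! hsmall
  have := hsmall x hx i
  have := hsmall y hy i
  rcases le_abs'.1 hxy' with h | h <;> omega

end diamGE

def latNorm (x : Fin d → ℤ) : ℕ := Finset.univ.sup fun i => (x i).natAbs

theorem mem_latBox_iff {r : ℕ} {x : Fin d → ℤ} : x ∈ latBox d r ↔ latNorm x ≤ r := by
  simp only [latBox, latNorm, Set.mem_ofPred_eq, Finset.sup_le_iff, Finset.mem_univ,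
    true_implies, Int.abs_eq_natAbs, Nat.cast_le]

theorem latNorm_le_succ_of_nnAdj {x y : Fin d → ℤ} (h : nnAdj x y) :
    latNorm y ≤ latNorm x + 1 := by
  refine Finset.sup_le fun i _ => ?_
  have hxi : (x i).natAbs ≤ latNorm x :=
    Finset.le_sup (f := fun i => (x i).natAbs) (Finset.mem_univ i)
  have := h.abs_sub_le_one i
  rw [abs_le] at this
  omega

theorem mem_latSphere_of_latNorm_eq [Nonempty (Fin d)] {r : ℕ} {x : Fin d → ℤ}
    (h : latNorm x = r) : x ∈ latSphere d r := by
  obtain ⟨i, -, hi⟩ := Finset.exists_mem_eq_sup Finset.univ Finset.univ_nonempty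
    fun i => (x i).natAbs
  refine ⟨mem_latBox_iff.2 h.le, i, ?_⟩
  rw [Int.abs_eq_natAbs, ← hi]
  exact_mod_cast h

theorem LatConn.exists_mem_latSphere {U : Set (Fin d → ℤ)} (hU : LatConn U) {M : ℕ}
    {q p : Fin d → ℤ} (hq : q ∈ U ∩ latBox d M) (hp : p ∈ U) {i : Fin d}
    (hpi : M ≤ (p i).natAbs) : (U ∩ latSphere d M).Nonempty := by
  have : Nonempty (Fin d) := ⟨i⟩
  have hpM : M ≤ latNorm p :=
    hpi.trans (Finset.le_sup (f := fun i => (p i).natAbs) (Finset.mem_univ i))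
  obtain ⟨w, hqw, hw⟩ := (latConn_iff_reflTransGen.1 hU q hq.1 p hp).exists_eq_of_le_succ
    (f := latNorm)
    (fun _ _ hxy => (latNorm_le_succ_of_nnAdj hxy.2.2).trans_eq (Order.succ_eq_add_one _).symm)
    (mem_latBox_iff.1 hq.2) hpM
  exact ⟨w, mem_of_reflTransGen_latAdjIn hqw hq.1, mem_latSphere_of_latNorm_eq hw⟩

section Scales

variable {ω ω' : (Fin d → ℤ) → Bool}

def GluedAt (ω ω' : (Fin d → ℤ) → Bool) (r : ℕ) (U : Set (Fin d → ℤ)) : Prop :=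
  U ⊆ openSites ω' ∧ LatConn U ∧
    ∃ C ⊆ U, IsCompOf C (openSites ω ∩ latBox d r) ∧ diamGE C (r / 5)

theorem ExistEv.exists_isCompOf {r : ℕ} (h : ExistEv d r ω) :
    ∃ C, IsCompOf C (openSites ω ∩ latBox d r) ∧ diamGE C (r / 5) := by
  obtain ⟨A, hA, hAc, hAd⟩ := h
  obtain ⟨C, hC, hAC⟩ := hAc.exists_isCompOf_superset hA hAd.nonempty
  exact ⟨C, hC, hAd.mono hAC le_rfl⟩

theorem ExistEv.exists_gluedAt (hω : openSites ω ⊆ openSites ω') {r : ℕ}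
    (h : ExistEv d r ω) :
    ∃ U ⊆ latBox d r, U.Nonempty ∧ GluedAt ω ω' r U := by
  obtain ⟨C, hC, hCd⟩ := h.exists_isCompOf
  exact ⟨C, fun _ hx => (hC.1 hx).2, hC.2.1, fun _ hx => hω (hC.1 hx).1, hC.2.2.1,
    C, subset_rfl, hC, hCd⟩

theorem GluedAt.exists_double (hω : openSites ω ⊆ openSites ω') {r : ℕ}
    {U : Set (Fin d → ℤ)} (hU : GluedAt ω ω' r U) (hex : ExistEv d (2 * r) ω)
    (hun : UniqueEv d (2 * r) ω ω') : ∃ U' ⊇ U, GluedAt ω ω' (2 * r) U' := by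
  obtain ⟨hUo, hUc, C, hCU, hC, hCd⟩ := hU
  obtain ⟨C', hC', hC'd⟩ := hex.exists_isCompOf
  obtain ⟨D, hD, hCD⟩ := hC.2.2.1.exists_isCompOf_superset
    (S := openSites ω ∩ latBox d (2 * r))
    (fun x hx => ⟨(hC.1 hx).1, latBox_mono (by omega) (hC.1 hx).2⟩) hC.2.1
  have hr : (0 : ℝ) ≤ r := r.cast_nonneg
  obtain ⟨B, hB, hBc, ⟨b, hbB, hbD⟩, ⟨b', hb'B, hb'C'⟩⟩ := hun D C' hD hC'
    (hCd.mono hCD (by push_cast; linarith)) (hC'd.mono subset_rfl (by push_cast; linarith))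
  obtain ⟨c, hc⟩ := hC.2.1
  have hUD : LatConn (U ∪ D) := hUc.union hD.2.2.1 ⟨c, hCU hc, hCD hc⟩
  have hUDB : LatConn (U ∪ D ∪ B) := hUD.union hBc ⟨b, Or.inr hbD, hbB⟩
  have hUDBC' : LatConn (U ∪ D ∪ B ∪ C') := hUDB.union hC'.2.2.1 ⟨b', Or.inr hb'B, hb'C'⟩
  refine ⟨U ∪ D ∪ B ∪ C', fun x hx => Or.inl (Or.inl (Or.inl hx)), ?_, hUDBC',
    C', fun _ hx => Or.inr hx, hC', hC'd⟩
  rintro x (((hx | hx) | hx) | hx)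
  exacts [hUo hx, hω (hD.1 hx).1, (hB hx).1, hω (hC'.1 hx).1]

theorem exists_gluedAt_of_scales (hω : openSites ω ⊆ openSites ω') {r₀ K : ℕ}
    (hex : ∀ k ≤ K, ExistEv d (2 ^ k * r₀) ω)
    (hun : ∀ k ≤ K, UniqueEv d (2 ^ k * r₀) ω ω') :
    ∃ U, (U ∩ latBox d r₀).Nonempty ∧ GluedAt ω ω' (2 ^ K * r₀) U := by
  induction K with
  | zero =>
    obtain ⟨U, hUB, ⟨q, hq⟩, hU⟩ := (hex 0 le_rfl).exists_gluedAt hω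
    rw [pow_zero, one_mul] at hUB hU ⊢
    exact ⟨U, ⟨q, hq, hUB hq⟩, hU⟩
  | succ K ih =>
    obtain ⟨U, hq, hU⟩ := ih (fun k hk => hex k (by omega)) (fun k hk => hun k (by omega))
    have hdouble : 2 ^ (K + 1) * r₀ = 2 * (2 ^ K * r₀) := by ring
    obtain ⟨U', hUU', hU'⟩ := hU.exists_double hω (hdouble ▸ hex (K + 1) le_rfl)
      (hdouble ▸ hun (K + 1) le_rfl)
    exact ⟨U', hq.mono (Set.inter_subset_inter_left _ hUU'), hdouble ▸ hU'⟩

end Scales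

theorem glue_scales_to_crossing_general (d : ℕ)
    (ω ω' : (Fin d → ℤ) → Bool) (hle : ∀ x, ω x ≤ ω' x)
    (r₀ M : ℕ) (K : ℕ)
    (hlow : r₀ ≤ M) (hhigh : 10 * M ≤ 2 ^ K * r₀)
    (hex : ∀ k ≤ K, ExistEv d (2 ^ k * r₀) ω)
    (hun : ∀ k ≤ K, UniqueEv d (2 ^ k * r₀) ω ω') :
    (∃ A : Set (Fin d → ℤ), A ⊆ openSites ω' ∧ LatConn A ∧
      (A ∩ latBox d r₀).Nonempty ∧ (A ∩ latSphere d M).Nonempty) ∧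
    (∃ l : List (Fin d → ℤ), l.Chain' nnAdj ∧ (∀ z ∈ l, z ∈ openSites ω') ∧
      (∃ x ∈ l, x ∈ latBox d r₀) ∧ (∃ y ∈ l, y ∈ latSphere d M)) := by
  obtain ⟨U, ⟨q, hqU, hq⟩, hUo, hUc, C, hCU, -, hCd⟩ :=
    exists_gluedAt_of_scales (openSites_mono hle) hex hun
  have hscale : (10 * M : ℝ) ≤ 2 ^ K * r₀ := by exact_mod_cast hhigh
  have hUd : diamGE U (2 * M) := hCd.mono hCU (by push_cast; linarith)
  obtain ⟨p, hpU, i, hpi⟩ := hUd.exists_le_natAbs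
  obtain ⟨w, hwU, hw⟩ := hUc.exists_mem_latSphere ⟨hqU, latBox_mono hlow hq⟩ hpU hpi
  obtain ⟨l, hl, hhead, hlast, hlU⟩ := hUc q hqU w hwU
  exact ⟨⟨U, hUo, hUc, ⟨q, hqU, hq⟩, ⟨w, hwU, hw⟩⟩, l, hl, fun z hz => hUo (hlU z hz),
    ⟨q, List.mem_of_mem_head? hhead, hq⟩, ⟨w, List.mem_of_mem_getLast? hlast, hw⟩⟩

/-- existence and uniqueness at all dyadic scales `r_k = 2^k r₀` up to
`r_K ≥ 10 M` produce, in the sprinkled configuration `ω'`, a connected open set joining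
`B_{r₀}` to `∂B_M`; in particular an `ω'`-open nearest-neighbor path joins them. -/
theorem glue_scales_to_crossing (d : ℕ) (hd : 1 ≤ d)
    (ω ω' : (Fin d → ℤ) → Bool) (hle : ∀ x, ω x ≤ ω' x)
    (r₀ M : ℕ) (hr₀ : 1 ≤ r₀) (hM : 1 ≤ M) (K : ℕ)
    (hlow : r₀ ≤ M) (hhigh : 10 * M ≤ 2 ^ K * r₀)
    (hex : ∀ k ≤ K, ExistEv d (2 ^ k * r₀) ω)
    (hun : ∀ k ≤ K, UniqueEv d (2 ^ k * r₀) ω ω') :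
    (∃ A : Set (Fin d → ℤ), A ⊆ openSites ω' ∧ LatConn A ∧
      (A ∩ latBox d r₀).Nonempty ∧ (A ∩ latSphere d M).Nonempty) ∧
    (∃ l : List (Fin d → ℤ), l.Chain' nnAdj ∧ (∀ z ∈ l, z ∈ openSites ω') ∧
      (∃ x ∈ l, x ∈ latBox d r₀) ∧ (∃ y ∈ l, y ∈ latSphere d M)) :=
  glue_scales_to_crossing_general d ω ω' hle r₀ M K hlow hhigh hex hun
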